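/- Let μ = (A − √(A² − 4B))/2 = (n−4)²/4 be the smaller root of ξ² − A·ξ + B = 0. Let v, w : ℝ → ℝ be C⁴ nonnegative solutions of the ODE v''''(t) − A·v''(t) + B·v(t) = g(v(t)) satisfying v(0) ≥ w(0), v'(0) ≥ w'(0), v''(0) − μ·v(0) ≥ w''(0) − μ·w(0), and v'''(0) − μ·v'(0) ≥ w'''(0) − μ·w'(0). Then v ≡ w on ℝ. -/

import Mathlib

/-!
With `ω = n/2` and `ν = (n-4)/2 = √μ` one has `A = ω² + ν²` and `B = ω²ν²`, so `h = v - w`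
solves `(D² - ω²)(D² - ν²) h = g(v) - g(w)`. Peeling off the four first-order factors with
exponential integrating factors, the initial conditions and the local Lipschitz bound on `g`
give `h ≥ -C ∫₀ᵗ h⁻`, hence `h ≥ 0` on `[0, ∞)` by Gronwall. Then the source is nonnegative, all
derivatives of `h` are nonnegative, and a positive value of `h` would make it grow with
`h'''' ≥ c hᵠ` (`q > 1`), which a chain of energy inequalities turns into finite-time blow-up.
So `v = w` on `[0, ∞)`; their Cauchy data at `0` then agree, and the same argument applied to
`t ↦ v(-t)`, `t ↦ w(-t)` gives `v = w` on `(-∞, 0]`.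
-/

open Real Filter Set

noncomputable section

/-- Conditions (G) on the nonlinearity `g`, extended to `[0,∞)` by `g 0 = 0`. -/
def CondG (n : ℕ) (g : ℝ → ℝ) : Prop :=
  ContDiffOn ℝ 1 g (Set.Ioi 0) ∧
  (∀ t > 0, 0 < g t) ∧
  Filter.Tendsto g (nhdsWithin 0 (Set.Ioi 0)) (nhds 0) ∧
  (∀ t > 0, g t / t < deriv g t ∧ deriv g t ≤ (((n : ℝ) + 4) / ((n : ℝ) - 4)) * (g t / t)) ∧
  (∃ β : ℝ, 0 ≤ β ∧ β < (n : ℝ) ^ 2 * ((n : ℝ) - 4) ^ 2 / 16 ∧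
    Filter.Tendsto (deriv g) (nhdsWithin 0 (Set.Ioi 0)) (nhds β)) ∧
  (∃ q c : ℝ, 1 < q ∧ 0 < c ∧ ∀ t ≥ 1, c * t ^ q ≤ g t) ∧
  g 0 = 0

/-- `v` solves the ODE `v'''' - A v'' + B v = g(v)` on all of `ℝ`. -/
def IsSol (A B : ℝ) (g v : ℝ → ℝ) : Prop :=
  ∀ t : ℝ, iteratedDeriv 4 v t - A * iteratedDeriv 2 v t + B * v t = g (v t)

theorem monotoneOn_of_hasDerivAt_nonneg {D : Set ℝ} (hD : Convex ℝ D) {f f' : ℝ → ℝ}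
    (hf : ∀ x ∈ D, HasDerivAt f (f' x) x) (hf' : ∀ x ∈ D, 0 ≤ f' x) : MonotoneOn f D :=
  monotoneOn_of_hasDerivWithinAt_nonneg hD (fun x hx => (hf x hx).continuousAt.continuousWithinAt)
    (fun x hx => (hf x (interior_subset hx)).hasDerivWithinAt)
    fun x hx => hf' x (interior_subset hx)

theorem eventually_half_le_of_hasDerivAt {P Q p q : ℝ → ℝ} (hQ : Tendsto Q atTop atTop)
    (h : ∀ᶠ t in atTop, HasDerivAt P (p t) t ∧ HasDerivAt Q (q t) t ∧ q t ≤ p t) :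
    ∀ᶠ t in atTop, Q t / 2 ≤ P t := by
  obtain ⟨a, ha⟩ := eventually_atTop.1 h
  have hmono : MonotoneOn (fun t => P t - Q t) (Ici a) :=
    monotoneOn_of_hasDerivAt_nonneg (convex_Ici a) (fun t ht => (ha t ht).1.sub (ha t ht).2.1)
      fun t ht => sub_nonneg.2 (ha t ht).2.2
  filter_upwards [eventually_ge_atTop a, hQ.eventually_ge_atTop (2 * (Q a - P a))] with t hat hQt
  have := hmono self_mem_Ici hat hat
  dsimp only at this
  linarith

theorem tendsto_atTop_of_hasDerivAt_ge {f f' : ℝ → ℝ} {ε : ℝ} (hε : 0 < ε)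
    (h : ∀ᶠ t in atTop, HasDerivAt f (f' t) t ∧ ε ≤ f' t) : Tendsto f atTop atTop := by
  have hlin : Tendsto (fun t => ε * t) atTop atTop := tendsto_id.const_mul_atTop hε
  refine tendsto_atTop_mono' _ ?_ (hlin.atTop_div_const two_pos)
  refine eventually_half_le_of_hasDerivAt hlin (h.mono fun t ht => ⟨ht.1, ?_, ht.2⟩)
  simpa using (hasDerivAt_id' t).const_mul ε

theorem exists_mul_rpow_le_of_hasDerivAt {h h₁ P p : ℝ → ℝ} {k e : ℝ} (hk : 0 < k)
    (he : 0 < e + 1) (hh : Tendsto h atTop atTop) (hd : ∀ t, HasDerivAt h (h₁ t) t)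
    (hP : ∀ᶠ t in atTop, HasDerivAt P (p t) t ∧ k * h t ^ e * h₁ t ≤ p t) :
    ∃ k' > 0, ∀ᶠ t in atTop, k' * h t ^ (e + 1) ≤ P t := by
  refine ⟨k / (e + 1) / 2, by positivity, ?_⟩
  have hQ : Tendsto (fun t => k / (e + 1) * h t ^ (e + 1)) atTop atTop :=
    ((tendsto_rpow_atTop he).comp hh).const_mul_atTop (by positivity)
  have hQP := eventually_half_le_of_hasDerivAt hQ (q := fun t => k * h t ^ e * h₁ t) (by
    filter_upwards [hP, hh.eventually_gt_atTop 0] with t ⟨hPt, hpt⟩ ht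
    refine ⟨hPt, ?_, hpt⟩
    refine (((hd t).rpow_const (p := e + 1) (Or.inl ht.ne')).const_mul _).congr_deriv ?_
    rw [add_sub_cancel_right]
    field_simp)
  filter_upwards [hQP] with t ht
  linarith

theorem sqrt_mul_rpow_half_le {c x p b : ℝ} (hc : 0 ≤ c) (hx : 0 ≤ x) (hb : 0 ≤ b)
    (h : c * x ^ p ≤ b ^ 2) : √c * x ^ (p / 2) ≤ b := by
  rw [← pow_le_pow_iff_left₀ (by positivity) hb two_ne_zero, mul_pow, sq_sqrt hc,
    ← rpow_natCast, ← rpow_mul hx]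
  norm_num
  exact h

theorem false_of_mul_rpow_le_deriv {h h₁ : ℝ → ℝ} {k r : ℝ} (hk : 0 < k) (hr : 1 < r)
    (hev : ∀ᶠ t in atTop, HasDerivAt h (h₁ t) t ∧ 0 < h t ∧ k * h t ^ r ≤ h₁ t) : False := by
  have hrk : 0 < (r - 1) * k := mul_pos (by linarith) hk
  have hlin : Tendsto (fun t => (r - 1) * k * t) atTop atTop := tendsto_id.const_mul_atTop hrk
  have key := eventually_half_le_of_hasDerivAt hlin (P := fun t => -h t ^ (1 - r))
    (p := fun t => (r - 1) * (h t ^ (-r) * h₁ t)) (by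
      filter_upwards [hev] with t ⟨hd, hpos, hle⟩
      refine ⟨?_, by simpa using (hasDerivAt_id' t).const_mul ((r - 1) * k), ?_⟩
      · refine (hd.rpow_const (p := 1 - r) (Or.inl hpos.ne')).neg.congr_deriv ?_
        rw [sub_sub_cancel_left]
        ring
      · have : k ≤ h t ^ (-r) * h₁ t :=
          calc k = h t ^ (-r) * (k * h t ^ r) := by
                rw [rpow_neg hpos.le]; field_simp
            _ ≤ h t ^ (-r) * h₁ t := mul_le_mul_of_nonneg_left hle (by positivity)
        exact mul_le_mul_of_nonneg_left this (by linarith))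
  obtain ⟨t, hPt, ⟨-, hpos, -⟩, ht⟩ := (key.and (hev.and (eventually_gt_atTop 0))).exists
  have := rpow_pos_of_pos hpos (1 - r)
  nlinarith

theorem false_of_mul_rpow_le_fourth_deriv {h h₁ h₂ h₃ h₄ : ℝ → ℝ} {c q : ℝ} (hc : 0 < c)
    (hq : 1 < q) (hd₀ : ∀ t, HasDerivAt h (h₁ t) t) (hd₁ : ∀ t, HasDerivAt h₁ (h₂ t) t)
    (hd₂ : ∀ t, HasDerivAt h₂ (h₃ t) t) (hd₃ : ∀ t, HasDerivAt h₃ (h₄ t) t)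
    (hh₁ : Tendsto h₁ atTop atTop)
    (hev : ∀ᶠ t in atTop, 0 ≤ h₂ t ∧ 0 ≤ h₃ t ∧ c * h t ^ q ≤ h₄ t) : False := by
  -- Energy chain: `h₃ h₁ ≳ h^(q+1)` and `h₂ h ≳ h₁²` give `h₂ ≳ h^((q+1)/2)`,
  -- hence `h₁ ≳ h^((q+3)/4)` with `(q+3)/4 > 1`.
  have hh : Tendsto h atTop atTop := tendsto_atTop_of_hasDerivAt_ge one_pos
    ((hh₁.eventually_ge_atTop 1).mono fun t ht => ⟨hd₀ t, ht⟩)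
  have hpos : ∀ᶠ t in atTop, 0 < h t ∧ 0 < h₁ t :=
    (hh.eventually_gt_atTop 0).and (hh₁.eventually_gt_atTop 0)
  have hsq : ∀ t, HasDerivAt (fun s => h₁ s ^ 2 / 2) (h₂ t * h₁ t) t := fun t =>
    ((hd₁ t).pow 2).div_const 2 |>.congr_deriv (by ring)
  obtain ⟨k₁, hk₁, hh₃h₁⟩ := exists_mul_rpow_le_of_hasDerivAt hc (by linarith) hh hd₀
    (P := fun t => h₃ t * h₁ t) (p := fun t => h₄ t * h₁ t + h₃ t * h₂ t) (by
      filter_upwards [hev, hpos] with t ⟨h2, h3, h4⟩ ⟨_, h1⟩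
      exact ⟨(hd₃ t).mul (hd₁ t),
        by nlinarith [mul_le_mul_of_nonneg_right h4 h1.le, mul_nonneg h3 h2]⟩)
  have hh₂h : ∀ᶠ t in atTop, h₁ t ^ 2 / 2 / 2 ≤ h₂ t * h t :=
    eventually_half_le_of_hasDerivAt ((hh₁.atTop_mul_atTop₀ hh₁).atTop_div_const two_pos |>.congr
      fun t => by ring) (p := fun t => h₃ t * h t + h₂ t * h₁ t) (by
      filter_upwards [hev, hpos] with t ⟨_, h3, _⟩ ⟨h0, _⟩
      exact ⟨(hd₂ t).mul (hd₀ t), hsq t, by nlinarith [mul_nonneg h3 h0.le]⟩)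
  obtain ⟨k₂, hk₂, hh₂sq⟩ := exists_mul_rpow_le_of_hasDerivAt (e := q) (by positivity : 0 < k₁ / 4)
    (by linarith) hh hd₀ (P := fun t => h₂ t ^ 2 / 2) (p := fun t => h₃ t * h₂ t) (by
      filter_upwards [hh₃h₁, hh₂h, hpos] with t hh₃h₁t hh₂ht ⟨h0, h1⟩
      refine ⟨((hd₂ t).pow 2).div_const 2 |>.congr_deriv (by ring), ?_⟩
      have hnn : 0 ≤ h₃ t * h₁ t := (mul_nonneg hk₁.le (by positivity)).trans hh₃h₁t
      refine le_of_mul_le_mul_right ?_ (mul_pos h1 h0)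
      calc k₁ / 4 * h t ^ q * h₁ t * (h₁ t * h t)
          = k₁ * h t ^ (q + 1) * (h₁ t ^ 2 / 2 / 2) := by rw [rpow_add_one h0.ne']; ring
        _ ≤ h₃ t * h₁ t * (h₂ t * h t) := mul_le_mul hh₃h₁t hh₂ht (by positivity) hnn
        _ = h₃ t * h₂ t * (h₁ t * h t) := by ring)
  obtain ⟨k₃, hk₃, hh₂⟩ : ∃ k₃ > 0, ∀ᶠ t in atTop, k₃ * h t ^ ((q + 1) / 2) ≤ h₂ t := by
    refine ⟨√(2 * k₂), by positivity, ?_⟩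
    filter_upwards [hh₂sq, hev, hpos] with t hh₂sqt ⟨h2, _⟩ ⟨h0, _⟩
    exact sqrt_mul_rpow_half_le (by positivity) h0.le h2 (by linarith)
  obtain ⟨k₄, hk₄, hh₁sq⟩ := exists_mul_rpow_le_of_hasDerivAt (e := (q + 1) / 2) hk₃
    (by linarith) hh hd₀ (P := fun t => h₁ t ^ 2 / 2) (p := fun t => h₂ t * h₁ t) (by
      filter_upwards [hh₂, hpos] with t hh₂t ⟨_, h1⟩
      exact ⟨hsq t, mul_le_mul_of_nonneg_right hh₂t h1.le⟩)
  refine false_of_mul_rpow_le_deriv (h := h) (h₁ := h₁) (k := √(2 * k₄))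
    (r := ((q + 1) / 2 + 1) / 2) (by positivity) (by linarith) ?_
  filter_upwards [hh₁sq, hpos] with t hh₁sqt ⟨h0, h1⟩
  exact ⟨hd₀ t, h0, sqrt_mul_rpow_half_le (by positivity) h0.le h1.le (by linarith)⟩

theorem hasDerivAt_exp_neg_mul_mul {X Y : ℝ → ℝ} {k t : ℝ}
    (hX : HasDerivAt X (k * X t + Y t) t) :
    HasDerivAt (fun s => exp (-k * s) * X s) (exp (-k * t) * Y t) t :=
  (((hasDerivAt_id' t).const_mul (-k)).exp.mul hX).congr_deriv (by ring)

theorem nonneg_of_hasDerivAt_linear {X Y : ℝ → ℝ} {k : ℝ}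
    (hX : ∀ t, HasDerivAt X (k * X t + Y t) t) (hY : ∀ t ≥ 0, 0 ≤ Y t) (hX0 : 0 ≤ X 0) :
    ∀ t ≥ 0, 0 ≤ X t := by
  intro t ht
  have hmono : MonotoneOn (fun s => exp (-k * s) * X s) (Ici 0) :=
    monotoneOn_of_hasDerivAt_nonneg (convex_Ici 0) (fun s _ => hasDerivAt_exp_neg_mul_mul (hX s))
      fun s hs => mul_nonneg (exp_pos _).le (hY s hs)
  have := hmono self_mem_Ici ht ht
  simp only [mul_zero, exp_zero, one_mul] at this
  exact nonneg_of_mul_nonneg_right (hX0.trans this) (exp_pos _)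

theorem exists_neg_mul_le_of_hasDerivAt_linear {X Y F f : ℝ → ℝ} {k C T : ℝ} (hT : 0 ≤ T)
    (hX : ∀ t, HasDerivAt X (k * X t + Y t) t) (hF : ∀ t, HasDerivAt F (f t) t)
    (hf : ∀ t, 0 ≤ f t) (hF0 : F 0 = 0) (hX0 : 0 ≤ X 0) (hC : 0 ≤ C)
    (hY : ∀ t ∈ Icc 0 T, -(C * (f t + F t)) ≤ Y t) :
    ∃ C' ≥ 0, ∀ t ∈ Icc 0 T, -(C' * F t) ≤ X t := by
  have hFmono : Monotone F := monotone_of_hasDerivAt_nonneg hF hf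
  have hexp : ∀ t ∈ Icc 0 T, exp (k * t) ≤ exp (|k| * T) ∧ exp (-k * t) ≤ exp (|k| * T) :=
    fun t ht => ⟨exp_le_exp.2 (by nlinarith [le_abs_self k, abs_nonneg k, ht.1, ht.2]),
      exp_le_exp.2 (by nlinarith [neg_abs_le k, abs_nonneg k, ht.1, ht.2])⟩
  set E := exp (|k| * T)
  refine ⟨E * (C * E * (1 + T)), by positivity, fun s hs => ?_⟩
  have hFs : 0 ≤ F s := hF0 ▸ hFmono hs.1
  have hψ : MonotoneOn (fun t => exp (-k * t) * X t + C * E * (F t + F s * t)) (Icc 0 s) := by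
    refine monotoneOn_of_hasDerivAt_nonneg (convex_Icc 0 s)
      (fun t _ => (hasDerivAt_exp_neg_mul_mul (hX t)).add
        (((hF t).add ((hasDerivAt_id' t).const_mul (F s))).const_mul (C * E))) fun t ht => ?_
    have hts : t ∈ Icc 0 T := ⟨ht.1, ht.2.trans hs.2⟩
    have hFt : F t ≤ F s := hFmono ht.2
    have hF0t : 0 ≤ F t := hF0 ▸ hFmono ht.1
    have : exp (-k * t) * (C * (f t + F t)) ≤ E * (C * (f t + F s)) :=
      mul_le_mul (hexp t hts).2 (by gcongr) (mul_nonneg hC (add_nonneg (hf t) hF0t))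
        (by positivity)
    nlinarith [mul_le_mul_of_nonneg_left (hY t hts) (exp_pos (-k * t)).le]
  have h0s := hψ ⟨le_rfl, hs.1⟩ ⟨hs.1, le_rfl⟩ hs.1
  simp only [mul_zero, exp_zero, one_mul, hF0, add_zero] at h0s
  have hlow : -(C * E * (1 + T) * F s) ≤ exp (-k * s) * X s := by
    nlinarith [mul_le_mul_of_nonneg_left hs.2 (mul_nonneg (by positivity : 0 ≤ C * E) hFs)]
  have hXs : X s = exp (k * s) * (exp (-k * s) * X s) := by
    rw [← mul_assoc, ← exp_add]; ring_nf; simp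
  rw [hXs]
  nlinarith [mul_le_mul_of_nonneg_left hlow (exp_pos (k * s)).le,
    mul_le_mul_of_nonneg_right (hexp s hs).1 (by positivity : 0 ≤ C * E * (1 + T) * F s)]

/-- `(D² - ω²)(D² - ν²) h = δ`, with `h₁, …, h₄` the successive derivatives of `h`. -/
structure FactoredODE (ω ν : ℝ) (h h₁ h₂ h₃ h₄ δ : ℝ → ℝ) : Prop where
  hasDerivAt₀ : ∀ t, HasDerivAt h (h₁ t) t
  hasDerivAt₁ : ∀ t, HasDerivAt h₁ (h₂ t) t
  hasDerivAt₂ : ∀ t, HasDerivAt h₂ (h₃ t) t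
  hasDerivAt₃ : ∀ t, HasDerivAt h₃ (h₄ t) t
  eq : ∀ t, h₄ t = (ω ^ 2 + ν ^ 2) * h₂ t - ω ^ 2 * ν ^ 2 * h t + δ t

namespace FactoredODE

variable {ω ν : ℝ} {h h₁ h₂ h₃ h₄ δ : ℝ → ℝ}

theorem hasDerivAt_sub_sq (hE : FactoredODE ω ν h h₁ h₂ h₃ h₄ δ) (t : ℝ) :
    HasDerivAt (fun s => h₂ s - ν ^ 2 * h s) (h₃ t - ν ^ 2 * h₁ t) t :=
  (hE.hasDerivAt₂ t).sub ((hE.hasDerivAt₀ t).const_mul _)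

/-- With `u = (D + ω)(D² - ν²) h`, the equation reads `u' = ω u + δ`. -/
theorem hasDerivAt_factor (hE : FactoredODE ω ν h h₁ h₂ h₃ h₄ δ) (t : ℝ) :
    HasDerivAt (fun s => h₃ s - ν ^ 2 * h₁ s + ω * (h₂ s - ν ^ 2 * h s))
      (ω * (h₃ t - ν ^ 2 * h₁ t + ω * (h₂ t - ν ^ 2 * h t)) + δ t) t :=
  (((hE.hasDerivAt₃ t).sub ((hE.hasDerivAt₁ t).const_mul _)).add
    ((hE.hasDerivAt_sub_sq t).const_mul ω)).congr_deriv (by rw [hE.eq t]; ring)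

theorem nonneg_of_lipschitz_source (hE : FactoredODE ω ν h h₁ h₂ h₃ h₄ δ) (hω : 0 ≤ ω)
    (hν : 0 ≤ ν) (hδ : ∀ T, ∃ L ≥ 0, ∀ t ∈ Icc 0 T, -(L * max (-h t) 0) ≤ δ t)
    (h0 : 0 ≤ h 0) (h1 : 0 ≤ h₁ 0) (h2 : 0 ≤ h₂ 0 - ν ^ 2 * h 0)
    (h3 : 0 ≤ h₃ 0 - ν ^ 2 * h₁ 0) : ∀ t ≥ 0, 0 ≤ h t := by
  intro T hT
  obtain ⟨L, hL, hLδ⟩ := hδ T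
  set f := fun t => max (-h t) 0
  have hfc : Continuous f := (continuous_iff_continuousAt.2 fun t =>
    (hE.hasDerivAt₀ t).continuousAt).neg.max continuous_const
  have hf : ∀ t, 0 ≤ f t := fun t => le_max_right _ _
  set F := fun t => ∫ s in (0 : ℝ)..t, f s
  have hF : ∀ t, HasDerivAt F (f t) t := fun t => (hfc.integral_hasStrictDerivAt 0 t).hasDerivAt
  have hF0 : F 0 = 0 := intervalIntegral.integral_same
  have hFnn : ∀ t ≥ 0, 0 ≤ F t := fun t ht => hF0 ▸ monotone_of_hasDerivAt_nonneg hF hf ht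
  have weaken : ∀ {X : ℝ → ℝ} {C₀ : ℝ}, 0 ≤ C₀ → (∀ t ∈ Icc 0 T, -(C₀ * F t) ≤ X t) →
      ∀ t ∈ Icc 0 T, -(C₀ * (f t + F t)) ≤ X t := fun hC₀ hX t ht =>
    (neg_le_neg (mul_le_mul_of_nonneg_left (le_add_of_nonneg_left (hf t)) hC₀)).trans (hX t ht)
  -- With `z = h'' - ν² h` and `y = h' + ν h`, the cascade `u' = ω u + δ`, `z' = -ω z + u`,
  -- `y' = ν y + z`, `h' = -ν h + y` turns `δ ≥ -L h⁻` into `h ≥ -C ∫₀ᵗ h⁻`; Gronwall then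
  -- gives `h⁻ = 0`.
  obtain ⟨C₁, hC₁, hu⟩ := exists_neg_mul_le_of_hasDerivAt_linear hT hE.hasDerivAt_factor hF hf
    hF0 (add_nonneg h3 (mul_nonneg hω h2)) hL fun t ht =>
      (neg_le_neg (mul_le_mul_of_nonneg_left (le_add_of_nonneg_right (hFnn t ht.1)) hL)).trans
        (hLδ t ht)
  obtain ⟨C₂, hC₂, hz⟩ := exists_neg_mul_le_of_hasDerivAt_linear (k := -ω) hT
    (fun t => (hE.hasDerivAt_sub_sq t).congr_deriv (by ring)) hF hf hF0 h2 hC₁ (weaken hC₁ hu)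
  obtain ⟨C₃, hC₃, hy⟩ := exists_neg_mul_le_of_hasDerivAt_linear (k := ν)
    (X := fun s => h₁ s + ν * h s) hT
    (fun t => ((hE.hasDerivAt₁ t).add ((hE.hasDerivAt₀ t).const_mul ν)).congr_deriv (by ring))
    hF hf hF0 (add_nonneg h1 (mul_nonneg hν h0)) hC₂ (weaken hC₂ hz)
  obtain ⟨C₄, hC₄, hh⟩ := exists_neg_mul_le_of_hasDerivAt_linear (k := -ν) (X := h)
    (Y := fun s => h₁ s + ν * h s) hT
    (fun t => (hE.hasDerivAt₀ t).congr_deriv (by ring)) hF hf hF0 h0 hC₃ (weaken hC₃ hy)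
  have hfF : ∀ t ∈ Ico 0 T, ‖f t‖ ≤ C₄ * ‖F t‖ + 0 := fun t ht => by
    rw [norm_of_nonneg (hf t), norm_of_nonneg (hFnn t ht.1), add_zero]
    exact max_le (by linarith [hh t (Ico_subset_Icc_self ht)]) (mul_nonneg hC₄ (hFnn t ht.1))
  have hFT := norm_le_gronwallBound_of_norm_deriv_right_le
    (fun t _ => (hF t).continuousAt.continuousWithinAt) (fun t _ => (hF t).hasDerivWithinAt)
    (by rw [hF0, norm_zero]) hfF T ⟨hT, le_rfl⟩
  rw [gronwallBound_ε0_δ0, norm_le_zero_iff] at hFT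
  simpa [hFT] using hh T ⟨hT, le_rfl⟩

/-- Once `h` is positive, every derivative grows and `h'''' ≥ c h^q` forces blow-up. -/
theorem eq_zero_of_superlinear (hE : FactoredODE ω ν h h₁ h₂ h₃ h₄ δ) (hω : 0 ≤ ω) {c q : ℝ}
    (hc : 0 < c) (hq : 1 < q) (hδ₀ : ∀ t, 0 ≤ h t → 0 ≤ δ t) (hδ₁ : ∀ t, 0 < h t → 0 < δ t)
    (hδq : ∀ t, 1 ≤ h t → c * h t ^ q ≤ δ t) (hh : ∀ t ≥ 0, 0 ≤ h t) (h1 : 0 ≤ h₁ 0)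
    (h2 : 0 ≤ h₂ 0 - ν ^ 2 * h 0) (h3 : 0 ≤ h₃ 0 - ν ^ 2 * h₁ 0) : ∀ t ≥ 0, h t = 0 := by
  have hdz₁ : ∀ t, HasDerivAt (fun s => h₃ s - ν ^ 2 * h₁ s)
      (ω ^ 2 * (h₂ t - ν ^ 2 * h t) + δ t) t := fun t =>
    ((hE.hasDerivAt₃ t).sub ((hE.hasDerivAt₁ t).const_mul _)).congr_deriv (by rw [hE.eq t]; ring)
  have hu := nonneg_of_hasDerivAt_linear hE.hasDerivAt_factor (fun t ht => hδ₀ t (hh t ht))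
    (add_nonneg h3 (mul_nonneg hω h2))
  have hz : ∀ t ≥ 0, 0 ≤ h₂ t - ν ^ 2 * h t := nonneg_of_hasDerivAt_linear (k := -ω)
    (fun t => (hE.hasDerivAt_sub_sq t).congr_deriv (by ring)) hu h2
  have hz₁_mono : MonotoneOn (fun s => h₃ s - ν ^ 2 * h₁ s) (Ici 0) :=
    monotoneOn_of_hasDerivAt_nonneg (convex_Ici 0) (fun t _ => hdz₁ t) fun t ht =>
      add_nonneg (mul_nonneg (sq_nonneg ω) (hz t ht)) (hδ₀ t (hh t ht))
  have hh₂ : ∀ t ≥ 0, 0 ≤ h₂ t := fun t ht => by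
    nlinarith [hz t ht, mul_nonneg (sq_nonneg ν) (hh t ht)]
  have hh₁_mono : MonotoneOn h₁ (Ici 0) :=
    monotoneOn_of_hasDerivAt_nonneg (convex_Ici 0) (fun t _ => hE.hasDerivAt₁ t) hh₂
  have hh₁ : ∀ t ≥ 0, 0 ≤ h₁ t := fun t ht => h1.trans (hh₁_mono self_mem_Ici ht ht)
  have hh_mono : MonotoneOn h (Ici 0) :=
    monotoneOn_of_hasDerivAt_nonneg (convex_Ici 0) (fun t _ => hE.hasDerivAt₀ t) hh₁
  have hh₃ : ∀ t ≥ 0, 0 ≤ h₃ t := fun t ht => by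
    nlinarith [h3.trans (hz₁_mono self_mem_Ici ht ht), mul_nonneg (sq_nonneg ν) (hh₁ t ht)]
  intro t₀ ht₀
  by_contra hne
  have hpos : ∀ t ≥ t₀, 0 < h t := fun t ht =>
    (lt_of_le_of_ne (hh t₀ ht₀) (Ne.symm hne)).trans_le (hh_mono ht₀ (ht₀.trans ht) ht)
  have hz₁_strict : StrictMonoOn (fun s => h₃ s - ν ^ 2 * h₁ s) (Ici t₀) :=
    strictMonoOn_of_hasDerivWithinAt_pos (convex_Ici t₀)
      (fun t _ => (hdz₁ t).continuousAt.continuousWithinAt) (fun t _ => (hdz₁ t).hasDerivWithinAt)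
      fun t ht => by
        rw [interior_Ici] at ht
        exact add_pos_of_nonneg_of_pos (mul_nonneg (sq_nonneg ω) (hz t (ht₀.trans ht.le)))
          (hδ₁ t (hpos t ht.le))
  set a := h₃ (t₀ + 1) - ν ^ 2 * h₁ (t₀ + 1)
  have ha : 0 < a := (h3.trans (hz₁_mono self_mem_Ici ht₀ ht₀)).trans_lt
    (hz₁_strict self_mem_Ici (by simp only [mem_Ici]; linarith) (by linarith))
  have hz_top : Tendsto (fun s => h₂ s - ν ^ 2 * h s) atTop atTop :=
    tendsto_atTop_of_hasDerivAt_ge ha <| (eventually_ge_atTop (t₀ + 1)).mono fun t ht =>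
      ⟨hE.hasDerivAt_sub_sq t, hz₁_mono (by simp only [mem_Ici]; linarith) (by
        simp only [mem_Ici]; linarith) ht⟩
  have hh₁_top : Tendsto h₁ atTop atTop :=
    tendsto_atTop_of_hasDerivAt_ge one_pos <| (hz_top.eventually_ge_atTop 1).and
      (eventually_ge_atTop 0) |>.mono fun t ⟨hz1, ht⟩ =>
        ⟨hE.hasDerivAt₁ t, by nlinarith [mul_nonneg (sq_nonneg ν) (hh t ht)]⟩
  have hh_top : Tendsto h atTop atTop := tendsto_atTop_of_hasDerivAt_ge one_pos <|
    (hh₁_top.eventually_ge_atTop 1).mono fun t ht => ⟨hE.hasDerivAt₀ t, ht⟩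
  refine false_of_mul_rpow_le_fourth_deriv hc hq hE.hasDerivAt₀ hE.hasDerivAt₁ hE.hasDerivAt₂
    hE.hasDerivAt₃ hh₁_top ?_
  filter_upwards [eventually_ge_atTop 0, hh_top.eventually_ge_atTop 1] with t ht ht1
  refine ⟨hh₂ t ht, hh₃ t ht, ?_⟩
  rw [hE.eq t]
  nlinarith [hδq t ht1, mul_nonneg (sq_nonneg ν) (hh₂ t ht), mul_nonneg (sq_nonneg ω) (hz t ht)]

end FactoredODE

theorem mul_rpow_sub_le_sub {g : ℝ → ℝ} {c q : ℝ} (hc : 0 ≤ c) (hq : 1 ≤ q)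
    (hslope : MonotoneOn (fun t => g t / t) (Ioi 0)) (hg0 : g 0 = 0)
    (hgrow : ∀ t ≥ 1, c * t ^ q ≤ g t) {x y : ℝ} (hy : 0 ≤ y) (hxy : 1 ≤ x - y) :
    c * (x - y) ^ q ≤ g x - g y := by
  have hx : 0 < x := by linarith
  have hgy : g y ≤ g x / x * y := by
    rcases hy.eq_or_lt with rfl | hy
    · simp [hg0]
    · exact (div_le_iff₀ hy).1 (hslope hy hx (by linarith))
  have hslx : c * (x - y) ^ (q - 1) ≤ g x / x :=
    calc c * (x - y) ^ (q - 1) ≤ c * x ^ (q - 1) :=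
          mul_le_mul_of_nonneg_left (rpow_le_rpow (by linarith) (by linarith) (by linarith)) hc
      _ = c * x ^ q / x := by rw [rpow_sub_one hx.ne']; ring
      _ ≤ g x / x := div_le_div_of_nonneg_right (hgrow x (by linarith)) hx.le
  calc c * (x - y) ^ q = c * (x - y) ^ (q - 1) * (x - y) := by
        rw [rpow_sub_one (by linarith : x - y ≠ 0)]; field_simp
    _ ≤ g x / x * (x - y) := mul_le_mul_of_nonneg_right hslx (by linarith)
    _ = g x - g x / x * y := by field_simp
    _ ≤ g x - g y := by linarith

namespace CondG

variable {n : ℕ} {g : ℝ → ℝ}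

theorem hasDerivAt (hg : CondG n g) {t : ℝ} (ht : 0 < t) : HasDerivAt g (deriv g t) t :=
  ((hg.1.differentiableOn one_ne_zero t ht).differentiableAt (Ioi_mem_nhds ht)).hasDerivAt

theorem continuousOn (hg : CondG n g) : ContinuousOn g (Ici 0) := by
  intro x hx
  rcases (mem_Ici.1 hx).eq_or_lt with rfl | hx
  · rw [← continuousWithinAt_Ioi_iff_Ici, ContinuousWithinAt, hg.2.2.2.2.2.2]
    exact hg.2.2.1
  · exact (hg.hasDerivAt hx).continuousAt.continuousWithinAt

theorem strictMonoOn (hg : CondG n g) : StrictMonoOn g (Ici 0) :=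
  strictMonoOn_of_deriv_pos (convex_Ici 0) hg.continuousOn fun t ht => by
    rw [interior_Ici] at ht
    exact (div_pos (hg.2.1 t ht) ht).trans (hg.2.2.2.1 t ht).1

theorem monotoneOn_div (hg : CondG n g) : MonotoneOn (fun t => g t / t) (Ioi 0) :=
  monotoneOn_of_hasDerivAt_nonneg (convex_Ioi 0)
    (fun t ht => (hg.hasDerivAt ht).div (hasDerivAt_id' t) (ne_of_gt ht)) fun t ht => by
      have := (div_lt_iff₀ ht).1 (hg.2.2.2.1 t ht).1
      exact div_nonneg (by linarith) (sq_nonneg t)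

/-- On `(0, M]` the derivative is at most `(n+4)/(n-4) · g(M)/M`, since `g t / t` increases. -/
theorem exists_sub_le_mul_sub (hn : 4 < n) (hg : CondG n g) (M : ℝ) :
    ∃ L ≥ 0, ∀ x y, 0 ≤ x → x ≤ y → y ≤ M → g y - g x ≤ L * (y - x) := by
  set M' := max M 1
  have hM' : 0 < M' := lt_of_lt_of_le one_pos (le_max_right _ _)
  have hn' : (4 : ℝ) < n := by exact_mod_cast hn
  have hK : 0 ≤ ((n : ℝ) + 4) / ((n : ℝ) - 4) := div_nonneg (by positivity) (by linarith)
  refine ⟨((n : ℝ) + 4) / ((n : ℝ) - 4) * (g M' / M'),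
    mul_nonneg hK (div_pos (hg.2.1 M' hM') hM').le, fun x y hx hxy hyM => ?_⟩
  refine (convex_Icc 0 M').image_sub_le_mul_sub_of_deriv_le
    (hg.continuousOn.mono Icc_subset_Ici_self) (fun t ht => ?_) (fun t ht => ?_) x
    ⟨hx, hxy.trans (hyM.trans (le_max_left _ _))⟩ y
    ⟨hx.trans hxy, hyM.trans (le_max_left _ _)⟩ hxy
  all_goals rw [interior_Icc] at ht
  · exact (hg.hasDerivAt ht.1).differentiableAt.differentiableWithinAt
  · exact (hg.2.2.2.1 t ht.1).2.trans
      (mul_le_mul_of_nonneg_left (hg.monotoneOn_div ht.1 hM' ht.2.le) hK)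

theorem exists_mul_rpow_le_sub (hg : CondG n g) :
    ∃ c q : ℝ, 0 < c ∧ 1 < q ∧ ∀ x y, 0 ≤ y → 1 ≤ x - y → c * (x - y) ^ q ≤ g x - g y := by
  obtain ⟨q, c, hq, hc, hgrow⟩ := hg.2.2.2.2.2.1
  exact ⟨c, q, hc, hq, fun x y hy hxy =>
    mul_rpow_sub_le_sub hc.le hq.le hg.monotoneOn_div hg.2.2.2.2.2.2 hgrow hy hxy⟩

end CondG

theorem ContDiff.hasDerivAt_iteratedDeriv {f : ℝ → ℝ} {n : WithTop ℕ∞} (hf : ContDiff ℝ n f)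
    {k : ℕ} (hk : (k : WithTop ℕ∞) < n) (t : ℝ) :
    HasDerivAt (iteratedDeriv k f) (iteratedDeriv (k + 1) f t) t := by
  rw [iteratedDeriv_succ]
  exact (hf.differentiable_iteratedDeriv k hk t).hasDerivAt

theorem iteratedDeriv_eq_of_eqOn_Ici {f g : ℝ → ℝ} {k : ℕ} {a : ℝ} (hf : ContDiffAt ℝ k f a)
    (hg : ContDiffAt ℝ k g a) (hfg : EqOn f g (Ici a)) :
    iteratedDeriv k f a = iteratedDeriv k g a := by
  rw [← iteratedDerivWithin_eq_iteratedDeriv (uniqueDiffOn_Ici a) hf self_mem_Ici,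
    ← iteratedDerivWithin_eq_iteratedDeriv (uniqueDiffOn_Ici a) hg self_mem_Ici]
  exact iteratedDerivWithin_congr hfg self_mem_Ici

theorem IsSol.comp_neg {A B : ℝ} {g v : ℝ → ℝ} (hv : IsSol A B g v) :
    IsSol A B g (fun t => v (-t)) := fun t => by
  norm_num [iteratedDeriv_comp_neg]
  exact hv (-t)

theorem IsSol.factoredODE_sub {ω ν : ℝ} {g v w : ℝ → ℝ} (hv : ContDiff ℝ 4 v)
    (hw : ContDiff ℝ 4 w) (hvsol : IsSol (ω ^ 2 + ν ^ 2) (ω ^ 2 * ν ^ 2) g v)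
    (hwsol : IsSol (ω ^ 2 + ν ^ 2) (ω ^ 2 * ν ^ 2) g w) :
    FactoredODE ω ν (fun t => v t - w t) (fun t => deriv v t - deriv w t)
      (fun t => iteratedDeriv 2 v t - iteratedDeriv 2 w t)
      (fun t => iteratedDeriv 3 v t - iteratedDeriv 3 w t)
      (fun t => iteratedDeriv 4 v t - iteratedDeriv 4 w t) (fun t => g (v t) - g (w t)) where
  hasDerivAt₀ t := ((hv.differentiable (by norm_num) t).hasDerivAt).sub
    (hw.differentiable (by norm_num) t).hasDerivAt
  hasDerivAt₁ t := by
    have hv₁ := hv.hasDerivAt_iteratedDeriv (k := 1) (by norm_num) t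
    have hw₁ := hw.hasDerivAt_iteratedDeriv (k := 1) (by norm_num) t
    rw [iteratedDeriv_one] at hv₁ hw₁
    exact hv₁.sub hw₁
  hasDerivAt₂ t := (hv.hasDerivAt_iteratedDeriv (k := 2) (by norm_num) t).sub
    (hw.hasDerivAt_iteratedDeriv (k := 2) (by norm_num) t)
  hasDerivAt₃ t := (hv.hasDerivAt_iteratedDeriv (k := 3) (by norm_num) t).sub
    (hw.hasDerivAt_iteratedDeriv (k := 3) (by norm_num) t)
  eq t := by linarith [hvsol t, hwsol t]

theorem eqOn_Ici_of_isSol {g : ℝ → ℝ} {ω ν c q : ℝ} (hω : 0 ≤ ω) (hν : 0 ≤ ν) (hc : 0 < c)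
    (hq : 1 < q) (hmono : StrictMonoOn g (Ici 0))
    (hlip : ∀ M, ∃ L ≥ 0, ∀ x y, 0 ≤ x → x ≤ y → y ≤ M → g y - g x ≤ L * (y - x))
    (hgap : ∀ x y, 0 ≤ y → 1 ≤ x - y → c * (x - y) ^ q ≤ g x - g y)
    {v w : ℝ → ℝ} (hv : ContDiff ℝ 4 v) (hw : ContDiff ℝ 4 w) (hv0 : ∀ t, 0 ≤ v t)
    (hw0 : ∀ t, 0 ≤ w t) (hvsol : IsSol (ω ^ 2 + ν ^ 2) (ω ^ 2 * ν ^ 2) g v)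
    (hwsol : IsSol (ω ^ 2 + ν ^ 2) (ω ^ 2 * ν ^ 2) g w) (h0 : w 0 ≤ v 0)
    (h1 : deriv w 0 ≤ deriv v 0)
    (h2 : iteratedDeriv 2 w 0 - ν ^ 2 * w 0 ≤ iteratedDeriv 2 v 0 - ν ^ 2 * v 0)
    (h3 : iteratedDeriv 3 w 0 - ν ^ 2 * deriv w 0 ≤ iteratedDeriv 3 v 0 - ν ^ 2 * deriv v 0) :
    EqOn v w (Ici 0) := by
  have hE := IsSol.factoredODE_sub hv hw hvsol hwsol
  have hδ₀ : ∀ t, 0 ≤ v t - w t → 0 ≤ g (v t) - g (w t) := fun t ht =>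
    sub_nonneg.2 (hmono.monotoneOn (hw0 t) (hv0 t) (sub_nonneg.1 ht))
  have hδ : ∀ T, ∃ L ≥ 0, ∀ t ∈ Icc 0 T,
      -(L * max (-(v t - w t)) 0) ≤ g (v t) - g (w t) := fun T => by
    obtain ⟨M, hM⟩ := (isCompact_Icc (a := 0) (b := T)).exists_bound_of_continuousOn
      hw.continuous.continuousOn
    obtain ⟨L, hL, hLip⟩ := hlip M
    refine ⟨L, hL, fun t ht => ?_⟩
    rcases le_or_gt (w t) (v t) with hwv | hvw
    · rw [max_eq_right (by linarith), mul_zero, neg_zero]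
      exact hδ₀ t (by linarith)
    · rw [max_eq_left (by linarith)]
      have := hLip (v t) (w t) (hv0 t) hvw.le ((le_abs_self _).trans (hM t ht))
      linarith
  have hnn := hE.nonneg_of_lipschitz_source hω hν hδ (by linarith) (by linarith) (by linarith)
    (by linarith)
  have hzero := hE.eq_zero_of_superlinear hω hc hq hδ₀
    (fun t ht => sub_pos.2 (hmono (hw0 t) (hv0 t) (sub_pos.1 ht)))
    (fun t ht => hgap (v t) (w t) (hw0 t) ht) hnn (by linarith) (by linarith) (by linarith)
  exact fun t ht => sub_eq_zero.1 (hzero t ht)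

theorem stmt_9_general (n : ℕ) (hn : 5 ≤ n) (g : ℝ → ℝ) (hg : CondG n g)
    (A B : ℝ) (hA : A = ((n : ℝ) * ((n : ℝ) - 4) + 8) / 2)
    (hB : B = (n : ℝ) ^ 2 * ((n : ℝ) - 4) ^ 2 / 16)
    (μ : ℝ)
    (hμ' : μ = ((n : ℝ) - 4) ^ 2 / 4)
    (v w : ℝ → ℝ) (hv4 : ContDiff ℝ 4 v) (hw4 : ContDiff ℝ 4 w)
    (hvnn : ∀ t, 0 ≤ v t) (hwnn : ∀ t, 0 ≤ w t)
    (hvsol : IsSol A B g v) (hwsol : IsSol A B g w)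
    (h0 : w 0 ≤ v 0)
    (h1 : deriv w 0 ≤ deriv v 0)
    (h2 : iteratedDeriv 2 w 0 - μ * w 0 ≤ iteratedDeriv 2 v 0 - μ * v 0)
    (h3 : iteratedDeriv 3 w 0 - μ * deriv w 0 ≤ iteratedDeriv 3 v 0 - μ * deriv v 0) :
    ∀ t, v t = w t := by
  obtain ⟨c, q, hc, hq, hgap⟩ := hg.exists_mul_rpow_le_sub
  have hn' : (5 : ℝ) ≤ n := by exact_mod_cast hn
  -- `ξ² - Aξ + B` has the roots `ω² = (n/2)²` and `ν² = ((n-4)/2)² = μ`.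
  have hA' : A = ((n : ℝ) / 2) ^ 2 + (((n : ℝ) - 4) / 2) ^ 2 := by rw [hA]; ring
  have hB' : B = ((n : ℝ) / 2) ^ 2 * (((n : ℝ) - 4) / 2) ^ 2 := by rw [hB]; ring
  have hμν : μ = (((n : ℝ) - 4) / 2) ^ 2 := by rw [hμ']; ring
  subst hA' hB' hμν
  have forward := fun v w => eqOn_Ici_of_isSol (v := v) (w := w) (ω := n / 2)
    (ν := (n - 4) / 2) (by positivity) (by linarith) hc hq hg.strictMonoOn
    (hg.exists_sub_le_mul_sub (by omega)) hgap
  have hright := forward v w hv4 hw4 hvnn hwnn hvsol hwsol h0 h1 h2 h3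
  have hcauchy : ∀ k ≤ 3,
      iteratedDeriv k (fun t => v (-t)) 0 = iteratedDeriv k (fun t => w (-t)) 0 := fun k hk => by
    rw [iteratedDeriv_comp_neg, iteratedDeriv_comp_neg, neg_zero,
      iteratedDeriv_eq_of_eqOn_Ici (hv4.contDiffAt.of_le (by norm_cast; omega))
        (hw4.contDiffAt.of_le (by norm_cast; omega)) hright]
  have hc₀ := hcauchy 0 (by norm_num)
  have hc₁ := hcauchy 1 (by norm_num)
  simp only [iteratedDeriv_zero, iteratedDeriv_one] at hc₀ hc₁
  have hleft := forward (fun t => v (-t)) (fun t => w (-t)) (hv4.comp contDiff_neg)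
    (hw4.comp contDiff_neg) (fun t => hvnn _) (fun t => hwnn _) hvsol.comp_neg hwsol.comp_neg
    hc₀.ge hc₁.ge (by rw [hcauchy 2 (by norm_num), hc₀]) (by rw [hcauchy 3 (by norm_num), hc₁])
  intro t
  rcases le_total 0 t with ht | ht
  · exact hright ht
  · simpa using hleft (show (0 : ℝ) ≤ -t by linarith)

theorem stmt_9 (n : ℕ) (hn : 5 ≤ n) (g : ℝ → ℝ) (hg : CondG n g)
    (A B : ℝ) (hA : A = ((n : ℝ) * ((n : ℝ) - 4) + 8) / 2)
    (hB : B = (n : ℝ) ^ 2 * ((n : ℝ) - 4) ^ 2 / 16)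
    (μ : ℝ) (hμ : μ = (A - Real.sqrt (A ^ 2 - 4 * B)) / 2)
    (hμ' : μ = ((n : ℝ) - 4) ^ 2 / 4)
    (v w : ℝ → ℝ) (hv4 : ContDiff ℝ 4 v) (hw4 : ContDiff ℝ 4 w)
    (hvnn : ∀ t, 0 ≤ v t) (hwnn : ∀ t, 0 ≤ w t)
    (hvsol : IsSol A B g v) (hwsol : IsSol A B g w)
    (h0 : w 0 ≤ v 0)
    (h1 : deriv w 0 ≤ deriv v 0)
    (h2 : iteratedDeriv 2 w 0 - μ * w 0 ≤ iteratedDeriv 2 v 0 - μ * v 0)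
    (h3 : iteratedDeriv 3 w 0 - μ * deriv w 0 ≤ iteratedDeriv 3 v 0 - μ * deriv v 0) :
    ∀ t, v t = w t :=
  stmt_9_general n hn g hg A B hA hB μ hμ' v w hv4 hw4 hvnn hwnn hvsol hwsol h0 h1 h2 h3

end
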